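/- arXiv:2410.14955 — 7 statements merged into one kernel-verified Lean document; each statement's English description precedes it below -/
import Mathlib

section
/- Let d ≥ 1, g with 1 ≤ g < d, t ≥ 0, δE ≥ 0, and let E_0 ≤ E_1 ≤ ... ≤ E_{d-1} be real numbers with E_0 = E_1 = ... = E_{g-1} (ground energy with degeneracy g). Then the imaginary-time-evolution failure probability P_F(t) = (∑_{i : E_i > E_0 + δE} exp(-2 t E_i)) / (∑_{i=0}^{d-1} exp(-2 t E_i)) satisfies P_F(t) ≤ 1 / (1 + g (d-g)^{-1} exp(2 t δE)). -/
/-!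
The failure weight sums over at most `d - g` levels, each contributing at most
`exp (-2 t (E₀ + δE))`, while the `g` ground levels alone contribute `g exp (-2 t E₀)` to the
normalisation. Since `x ↦ x / (x + c)` is increasing, the failure probability is at most
`B / (B + c)` with `B = (d - g) exp (-2 t (E₀ + δE))` and `c = g exp (-2 t E₀)`, and
`c / B = g (d - g)⁻¹ exp (2 t δE)`.
-/

open Finset Real

theorem div_le_one_div_one_add_div_of_add_le {α : Type*} [Field α] [LinearOrder α]
    [IsStrictOrderedRing α] {S N B c : α} (hS : 0 ≤ S) (hSB : S ≤ B) (hB : 0 < B) (hc : 0 ≤ c)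
    (hN : S + c ≤ N) : S / N ≤ 1 / (1 + c / B) := by
  have hBc : 0 < B + c := by linarith
  rw [show 1 / (1 + c / B) = B / (B + c) by field_simp]
  rcases (show 0 ≤ N by linarith).eq_or_lt with hN0 | hN0
  · rw [← hN0, div_zero]
    positivity
  · rw [div_le_div_iff₀ hN0 hBc]
    nlinarith [mul_le_mul_of_nonneg_right hSB hc, mul_le_mul_of_nonneg_left hN hB.le]

section BoltzmannWeights

variable {ι : Type*} [Fintype ι] (E : ι → ℝ) {t : ℝ}

theorem disjoint_filter_eq_filter_add_lt {E₀ δ : ℝ} (hδ : 0 ≤ δ) :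
    Disjoint ({i | E i = E₀} : Finset ι) ({i | E₀ + δ < E i} : Finset ι) := by
  refine disjoint_filter.2 fun i _ hi => ?_
  rw [hi]
  linarith

theorem card_filter_add_lt_add_card_filter_eq_le_card {E₀ δ : ℝ} (hδ : 0 ≤ δ) :
    #{i | E₀ + δ < E i} + #{i | E i = E₀} ≤ Fintype.card ι := by
  rw [add_comm, ← card_disjUnion _ _ (disjoint_filter_eq_filter_add_lt E hδ)]
  exact card_le_univ _

theorem sum_exp_filter_lt_le (ht : 0 ≤ t) (a : ℝ) :
    ∑ i with a < E i, exp (-2 * t * E i) ≤ #{i | a < E i} * exp (-2 * t * a) := by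
  rw [← nsmul_eq_mul]
  refine sum_le_card_nsmul _ _ _ fun i hi => exp_le_exp.2 ?_
  have := (mem_filter.1 hi).2
  nlinarith

theorem sum_exp_filter_eq (E₀ : ℝ) :
    ∑ i with E i = E₀, exp (-2 * t * E i) = #{i | E i = E₀} * exp (-2 * t * E₀) := by
  rw [sum_congr rfl fun i hi => by rw [(mem_filter.1 hi).2], sum_const, nsmul_eq_mul]

theorem sum_exp_filter_add_lt_add_card_mul_exp_le_sum {E₀ δ : ℝ} (hδ : 0 ≤ δ) :
    ∑ i with E₀ + δ < E i, exp (-2 * t * E i) + #{i | E i = E₀} * exp (-2 * t * E₀)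
      ≤ ∑ i, exp (-2 * t * E i) := by
  rw [← sum_exp_filter_eq, add_comm,
    ← sum_disjUnion (disjoint_filter_eq_filter_add_lt E hδ)]
  exact sum_le_sum_of_subset_of_nonneg (subset_univ _) fun i _ _ => (exp_pos _).le

end BoltzmannWeights

theorem ite_failure_probability_upper_bound_general
    (d g : ℕ) (hd : 0 < d) (hgd : g < d)
    (t δE : ℝ) (ht : 0 ≤ t) (hδE : 0 ≤ δE)
    (E : Fin d → ℝ)
    (hdeg : ∀ i : Fin d, E i = E ⟨0, hd⟩ ↔ (i : ℕ) < g) :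
    (∑ i ∈ Finset.univ.filter (fun i : Fin d => E ⟨0, hd⟩ + δE < E i),
        Real.exp (-2 * t * E i)) / (∑ i : Fin d, Real.exp (-2 * t * E i))
      ≤ 1 / (1 + (g : ℝ) * ((d : ℝ) - g)⁻¹ * Real.exp (2 * t * δE)) := by
  set E₀ := E ⟨0, hd⟩
  have hground : #{i | E i = E₀} = g := by
    rw [filter_congr fun i _ => hdeg i, Fin.card_filter_val_lt, min_eq_right hgd.le]
  have hdg : (0 : ℝ) < d - g := sub_pos.2 (by exact_mod_cast hgd)
  have hfail : (#{i | E₀ + δE < E i} : ℝ) ≤ d - g := by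
    have := card_filter_add_lt_add_card_filter_eq_le_card E hδE (E₀ := E₀)
    rw [hground, Fintype.card_fin] at this
    rw [le_sub_iff_add_le]
    exact_mod_cast this
  have hB : (#{i | E₀ + δE < E i} : ℝ) * exp (-2 * t * (E₀ + δE))
      ≤ (d - g) * exp (-2 * t * (E₀ + δE)) :=
    mul_le_mul_of_nonneg_right hfail (exp_pos _).le
  calc _ ≤ 1 / (1 + g * exp (-2 * t * E₀) / ((d - g) * exp (-2 * t * (E₀ + δE)))) := by
        refine div_le_one_div_one_add_div_of_add_le (sum_nonneg fun i _ => (exp_pos _).le)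
          ((sum_exp_filter_lt_le E ht _).trans hB) (by positivity) (by positivity) ?_
        simpa only [hground] using
          sum_exp_filter_add_lt_add_card_mul_exp_le_sum E (t := t) (E₀ := E₀) hδE
    _ = _ := by
        rw [mul_div_mul_comm, ← exp_sub, div_eq_mul_inv (g : ℝ)]
        ring_nf

/-- ITE failure probability upper bound. -/
theorem ite_failure_probability_upper_bound
    (d g : ℕ) (hd : 0 < d) (hg : 1 ≤ g) (hgd : g < d)
    (t δE : ℝ) (ht : 0 ≤ t) (hδE : 0 ≤ δE)
    (E : Fin d → ℝ) (hmono : Monotone E)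
    (hdeg : ∀ i : Fin d, E i = E ⟨0, hd⟩ ↔ (i : ℕ) < g) :
    (∑ i ∈ Finset.univ.filter (fun i : Fin d => E ⟨0, hd⟩ + δE < E i),
        Real.exp (-2 * t * E i)) / (∑ i : Fin d, Real.exp (-2 * t * E i))
      ≤ 1 / (1 + (g : ℝ) * ((d : ℝ) - g)⁻¹ * Real.exp (2 * t * δE)) :=
  ite_failure_probability_upper_bound_general d g hd hgd t δE ht hδE E hdeg
end

section
/- Let ψ and φ be unit vectors in a finite-dimensional complex inner product space H, and let H = S₁ ⊕ S₂ be an orthogonal direct sum decomposition. Write ψ = cos α · ψ̂₁ + sin α · ψ̂₂ and φ = cos β · φ̂₁ + sin β · φ̂₂ with ψ̂₁, φ̂₁ unit vectors in S₁, ψ̂₂, φ̂₂ unit vectors in S₂, and α, β ∈ [0, π/2]. If 0 ≤ ε ≤ √2 and ‖ψ - φ‖ ≤ ε, then |α - β| ≤ 2 arcsin(ε/2). -/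
private lemma aux_half_le {a b : ℝ} (ha : 0 ≤ a) (hb : 0 ≤ b) (h : 4 * a ^ 2 ≤ b ^ 2) :
    a ≤ b / 2 := by nlinarith

/-- If two decomposed unit vectors are ε-close, their angles differ by at most 2 arcsin(ε/2). -/
theorem angle_close_of_states_close
    {H : Type*} [NormedAddCommGroup H] [InnerProductSpace ℂ H] [FiniteDimensional ℂ H]
    (ψ φ ψ1 ψ2 φ1 φ2 : H) (α β ε : ℝ)
    (hψn : ‖ψ‖ = 1) (hφn : ‖φ‖ = 1)
    (hψ1 : ‖ψ1‖ = 1) (hψ2 : ‖ψ2‖ = 1) (hφ1 : ‖φ1‖ = 1) (hφ2 : ‖φ2‖ = 1)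
    (hψ12 : (inner ℂ ψ1 ψ2 : ℂ) = 0) (hφ12 : (inner ℂ φ1 φ2 : ℂ) = 0)
    (hψ1φ2 : (inner ℂ ψ1 φ2 : ℂ) = 0) (hφ1ψ2 : (inner ℂ φ1 ψ2 : ℂ) = 0)
    (hα : α ∈ Set.Icc 0 (Real.pi / 2)) (hβ : β ∈ Set.Icc 0 (Real.pi / 2))
    (hψ : ψ = (Real.cos α : ℂ) • ψ1 + (Real.sin α : ℂ) • ψ2)
    (hφ : φ = (Real.cos β : ℂ) • φ1 + (Real.sin β : ℂ) • φ2)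
    (hε0 : 0 ≤ ε) (hε2 : ε ≤ Real.sqrt 2)
    (hclose : ‖ψ - φ‖ ≤ ε) :
    |α - β| ≤ 2 * Real.arcsin (ε / 2) := by
  obtain ⟨hα0, hα1⟩ := hα
  obtain ⟨hβ0, hβ1⟩ := hβ
  have hπ := Real.pi_pos
  have hψ2φ1 : (inner ℂ ψ2 φ1 : ℂ) = 0 := by
    rw [← inner_conj_symm, hφ1ψ2, map_zero]
  have hcα : 0 ≤ Real.cos α := Real.cos_nonneg_of_mem_Icc ⟨by linarith, hα1⟩
  have hcβ : 0 ≤ Real.cos β := Real.cos_nonneg_of_mem_Icc ⟨by linarith, hβ1⟩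
  have hsα : 0 ≤ Real.sin α := Real.sin_nonneg_of_nonneg_of_le_pi hα0 (by linarith)
  have hsβ : 0 ≤ Real.sin β := Real.sin_nonneg_of_nonneg_of_le_pi hβ0 (by linarith)
  -- inner product of ψ and φ
  have hinner : (inner ℂ ψ φ : ℂ) = (Real.cos α * Real.cos β : ℝ) * (inner ℂ ψ1 φ1 : ℂ)
      + (Real.sin α * Real.sin β : ℝ) * (inner ℂ ψ2 φ2 : ℂ) := by
    rw [hψ, hφ]
    simp only [inner_add_left, inner_add_right, inner_smul_left, inner_smul_right,
      hψ1φ2, hψ2φ1, Complex.conj_ofReal, mul_zero, zero_mul, add_zero, zero_add]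
    push_cast [Complex.conj_ofReal]
    ring
  have hre : (inner ℂ ψ φ : ℂ).re = Real.cos α * Real.cos β * (inner ℂ ψ1 φ1 : ℂ).re
      + Real.sin α * Real.sin β * (inner ℂ ψ2 φ2 : ℂ).re := by
    rw [hinner]
    simp only [Complex.add_re, Complex.mul_re, Complex.ofReal_re, Complex.ofReal_im]
    ring
  have hRe1 : (inner ℂ ψ1 φ1 : ℂ).re ≤ 1 := by
    have := re_inner_le_norm (𝕜 := ℂ) ψ1 φ1
    simp only [RCLike.re_to_complex] at this
    rw [hψ1, hφ1] at this; linarith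
  have hRe2 : (inner ℂ ψ2 φ2 : ℂ).re ≤ 1 := by
    have := re_inner_le_norm (𝕜 := ℂ) ψ2 φ2
    simp only [RCLike.re_to_complex] at this
    rw [hψ2, hφ2] at this; linarith
  -- norm of the difference
  have hnorm : ‖ψ - φ‖ ^ 2 = 2 - 2 * (inner ℂ ψ φ : ℂ).re := by
    have := norm_sub_sq (𝕜 := ℂ) ψ φ
    simp only [RCLike.re_to_complex] at this
    rw [this, hψn, hφn]; ring
  have hcos : Real.cos (α - β) = Real.cos α * Real.cos β + Real.sin α * Real.sin β :=
    Real.cos_sub α β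
  have hge : 2 - 2 * Real.cos (α - β) ≤ ‖ψ - φ‖ ^ 2 := by
    rw [hnorm, hre, hcos]
    nlinarith [mul_nonneg hcα hcβ, mul_nonneg hsα hsβ]
  have hsq : ‖ψ - φ‖ ^ 2 ≤ ε ^ 2 := by
    have := norm_nonneg (ψ - φ)
    nlinarith
  -- half-angle
  set t := |α - β| / 2 with ht
  have ht0 : 0 ≤ t := by positivity
  have habs : |α - β| ≤ Real.pi / 2 := by
    rw [abs_sub_le_iff]; constructor <;> linarith
  have htle : t ≤ Real.pi / 2 := by rw [ht]; linarith
  have hts : Real.sin t ^ 2 = Real.sin ((α - β) / 2) ^ 2 := by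
    rcases abs_cases (α - β) with ⟨h1, h2⟩ | ⟨h1, h2⟩
    · rw [ht, h1]
    · rw [ht, h1, neg_div, Real.sin_neg]; ring
  have hc2 : Real.cos (α - β) = 1 - 2 * Real.sin ((α - β) / 2) ^ 2 := by
    have h := Real.cos_two_mul ((α - β) / 2)
    have h2 : 2 * ((α - β) / 2) = α - β := by ring
    rw [h2] at h
    linarith [Real.sin_sq_add_cos_sq ((α - β) / 2)]
  have hst0 : 0 ≤ Real.sin t := Real.sin_nonneg_of_nonneg_of_le_pi ht0 (by linarith)
  have h4 : 4 * Real.sin t ^ 2 ≤ ε ^ 2 := by rw [hts]; linarith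
  have hst : Real.sin t ≤ ε / 2 := aux_half_le hst0 hε0 h4
  have harc : t ≤ Real.arcsin (ε / 2) := by
    have h := Real.monotone_arcsin hst
    rwa [Real.arcsin_sin (by linarith) htle] at h
  have : |α - β| = 2 * t := by rw [ht]; ring
  linarith
end

section
/- Let ψ and φ be unit vectors in a finite-dimensional complex Hilbert space H with orthogonal decomposition H = S₁ ⊕ S₂, and let P₂ denote the orthogonal projection onto S₂. Define failure probabilities p_ψ = ‖P₂ ψ‖² and p_φ = ‖P₂ φ‖². If 0 ≤ ε ≤ √2 and ‖ψ - φ‖ ≤ ε, then |p_φ - p_ψ| ≤ ε · √(1 - ε²/4). -/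
set_option maxHeartbeats 1000000

open RCLike

lemma re_inner_add_sub {E : Type*} [NormedAddCommGroup E] [InnerProductSpace ℂ E] (a b : E) :
    re (inner ℂ (a + b) (a - b) : ℂ) = ‖a‖ ^ 2 - ‖b‖ ^ 2 := by
  simp only [inner_add_left, inner_sub_right, map_add, map_sub]
  have h : re (inner ℂ b a : ℂ) = re (inner ℂ a b : ℂ) := (inner_re_symm (𝕜 := ℂ) a b).symm
  have ha : re (inner ℂ a a : ℂ) = ‖a‖ ^ 2 := by
    rw [← inner_self_eq_norm_sq (𝕜 := ℂ)]
  have hb : re (inner ℂ b b : ℂ) = ‖b‖ ^ 2 := by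
    rw [← inner_self_eq_norm_sq (𝕜 := ℂ)]
  linarith

lemma abs_re_inner_le {E : Type*} [NormedAddCommGroup E] [InnerProductSpace ℂ E] (a b : E) :
    |re (inner ℂ a b : ℂ)| ≤ ‖a‖ * ‖b‖ :=
  (abs_re_le_norm _).trans (norm_inner_le_norm a b)


lemma qite_mono_aux {a b : ℝ} (ha : 0 ≤ a) (hab : a ≤ b) (hb : b ^ 2 ≤ 2) :
    (4 - a ^ 2) * a ^ 2 ≤ (4 - b ^ 2) * b ^ 2 := by
  have h1 : a ^ 2 ≤ b ^ 2 := by nlinarith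
  have h2 : (0:ℝ) ≤ 4 - b ^ 2 - a ^ 2 := by nlinarith
  nlinarith [mul_nonneg (sub_nonneg.2 h1) h2]

/-- QITE failure probability upper bound. -/
theorem failure_probability_close_of_states_close
    {H : Type*} [NormedAddCommGroup H] [InnerProductSpace ℂ H] [FiniteDimensional ℂ H]
    (S₂ : Submodule ℂ H) (ψ φ : H) (hψ : ‖ψ‖ = 1) (hφ : ‖φ‖ = 1)
    (ε : ℝ) (hε0 : 0 ≤ ε) (hε2 : ε ≤ Real.sqrt 2) (hclose : ‖ψ - φ‖ ≤ ε) :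
    |‖(S₂.orthogonalProjectionOnto φ : S₂)‖ ^ 2 - ‖(S₂.orthogonalProjectionOnto ψ : S₂)‖ ^ 2|
      ≤ ε * Real.sqrt (1 - ε ^ 2 / 4) := by
  set P := S₂.orthogonalProjectionOnto with hP
  set Q := S₂ᗮ.orthogonalProjectionOnto with hQ
  set s : H := φ + ψ with hs
  set d : H := φ - ψ with hd
  set Δ : ℝ := ‖(P φ : S₂)‖ ^ 2 - ‖(P ψ : S₂)‖ ^ 2 with hΔ
  -- basic norms
  have hδε : ‖d‖ ≤ ε := by rw [hd, norm_sub_rev]; exact hclose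
  have hδ0 : (0:ℝ) ≤ ‖d‖ := norm_nonneg _
  -- ε² ≤ 2
  have hsq2 : Real.sqrt 2 ^ 2 = 2 := Real.sq_sqrt (by norm_num)
  have hε2' : ε ^ 2 ≤ 2 := by nlinarith [Real.sqrt_nonneg 2]
  -- r
  set r := Real.sqrt (1 - ε ^ 2 / 4) with hrdef
  have hr0 : 0 ≤ r := Real.sqrt_nonneg _
  have hr : r ^ 2 = 1 - ε ^ 2 / 4 := Real.sq_sqrt (by linarith)
  -- bound 1 : |Δ| ≤ ‖P s‖ ‖P d‖
  have e1 : Δ = re (inner ℂ (P s) (P d) : ℂ) := by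
    rw [hs, hd, map_add, map_sub]
    exact (re_inner_add_sub _ _).symm
  have m1 : |Δ| ≤ ‖(P s : S₂)‖ * ‖(P d : S₂)‖ := by
    rw [e1]; exact abs_re_inner_le _ _
  -- bound 2 : |Δ| ≤ ‖Q s‖ ‖Q d‖
  have pyψ : ‖ψ‖ ^ 2 = ‖(P ψ : S₂)‖ ^ 2 + ‖(Q ψ : S₂ᗮ)‖ ^ 2 :=
    Submodule.norm_sq_eq_add_norm_sq_projection ψ S₂
  have pyφ : ‖φ‖ ^ 2 = ‖(P φ : S₂)‖ ^ 2 + ‖(Q φ : S₂ᗮ)‖ ^ 2 :=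
    Submodule.norm_sq_eq_add_norm_sq_projection φ S₂
  have e2 : ‖(Q ψ : S₂ᗮ)‖ ^ 2 - ‖(Q φ : S₂ᗮ)‖ ^ 2 = re (inner ℂ (Q ψ + Q φ) (Q ψ - Q φ) : ℂ) :=
    (re_inner_add_sub _ _).symm
  have hΔ2 : Δ = ‖(Q ψ : S₂ᗮ)‖ ^ 2 - ‖(Q φ : S₂ᗮ)‖ ^ 2 := by
    rw [hψ] at pyψ; rw [hφ] at pyφ; rw [hΔ]; nlinarith
  have hQs : Q ψ + Q φ = Q s := by rw [hs, map_add, add_comm]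
  have hQd : ‖(Q ψ - Q φ : S₂ᗮ)‖ = ‖(Q d : S₂ᗮ)‖ := by
    rw [hd, map_sub, norm_sub_rev]
  have m2 : |Δ| ≤ ‖(Q s : S₂ᗮ)‖ * ‖(Q d : S₂ᗮ)‖ := by
    rw [hΔ2, e2, hQs]
    calc |re (inner ℂ (Q s) (Q ψ - Q φ) : ℂ)| ≤ ‖(Q s : S₂ᗮ)‖ * ‖(Q ψ - Q φ : S₂ᗮ)‖ :=
          abs_re_inner_le _ _
      _ = ‖(Q s : S₂ᗮ)‖ * ‖(Q d : S₂ᗮ)‖ := by rw [hQd]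
  -- Pythagoras for s and d
  have pys : ‖s‖ ^ 2 = ‖(P s : S₂)‖ ^ 2 + ‖(Q s : S₂ᗮ)‖ ^ 2 :=
    Submodule.norm_sq_eq_add_norm_sq_projection s S₂
  have pyd : ‖d‖ ^ 2 = ‖(P d : S₂)‖ ^ 2 + ‖(Q d : S₂ᗮ)‖ ^ 2 :=
    Submodule.norm_sq_eq_add_norm_sq_projection d S₂
  -- parallelogram
  have par : ‖s‖ * ‖s‖ + ‖d‖ * ‖d‖ = 2 * (‖φ‖ * ‖φ‖ + ‖ψ‖ * ‖ψ‖) :=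
    by have := parallelogram_law_with_norm ℂ φ ψ; simp only [pow_two] at this; exact this
  rw [hψ] at par; rw [hφ] at par
  have hpar : ‖s‖ ^ 2 + ‖d‖ ^ 2 = 4 := by rw [pow_two, pow_two]; linarith
  have hσ : ‖s‖ ^ 2 = 4 - ‖d‖ ^ 2 := by linarith
  -- combine
  have m3 : |Δ| * |Δ| ≤ (‖(P s : S₂)‖ * ‖(P d : S₂)‖) * (‖(Q s : S₂ᗮ)‖ * ‖(Q d : S₂ᗮ)‖) :=
    mul_le_mul m1 m2 (abs_nonneg _) (by positivity)
  have amgm1 : ‖(P s : S₂)‖ * ‖(Q s : S₂ᗮ)‖ ≤ ‖s‖ ^ 2 / 2 := by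
    have h := sq_nonneg (‖(P s : S₂)‖ - ‖(Q s : S₂ᗮ)‖)
    rw [sub_sq] at h; linarith
  have amgm2 : ‖(P d : S₂)‖ * ‖(Q d : S₂ᗮ)‖ ≤ ‖d‖ ^ 2 / 2 := by
    have h := sq_nonneg (‖(P d : S₂)‖ - ‖(Q d : S₂ᗮ)‖)
    rw [sub_sq] at h; linarith
  have amgm : (‖(P s : S₂)‖ * ‖(Q s : S₂ᗮ)‖) * (‖(P d : S₂)‖ * ‖(Q d : S₂ᗮ)‖)
      ≤ (‖s‖ ^ 2 / 2) * (‖d‖ ^ 2 / 2) :=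
    mul_le_mul amgm1 amgm2 (by positivity) (by positivity)
  have step1 : |Δ| ^ 2 ≤ (‖s‖ ^ 2 / 2) * (‖d‖ ^ 2 / 2) := by
    calc |Δ| ^ 2 = |Δ| * |Δ| := sq |Δ|
      _ ≤ (‖(P s : S₂)‖ * ‖(P d : S₂)‖) * (‖(Q s : S₂ᗮ)‖ * ‖(Q d : S₂ᗮ)‖) := m3
      _ = (‖(P s : S₂)‖ * ‖(Q s : S₂ᗮ)‖) * (‖(P d : S₂)‖ * ‖(Q d : S₂ᗮ)‖) := by ring
      _ ≤ (‖s‖ ^ 2 / 2) * (‖d‖ ^ 2 / 2) := amgm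
  have step2 : (‖s‖ ^ 2 / 2) * (‖d‖ ^ 2 / 2) = (4 - ‖d‖ ^ 2) * ‖d‖ ^ 2 / 4 := by
    rw [hσ]; ring
  have mono : (4 - ‖d‖ ^ 2) * ‖d‖ ^ 2 ≤ (4 - ε ^ 2) * ε ^ 2 :=
    qite_mono_aux hδ0 hδε hε2'
  have hrhs : (ε * r) ^ 2 = (4 - ε ^ 2) * ε ^ 2 / 4 := by
    rw [mul_pow, hr]; ring
  have key : |Δ| ^ 2 ≤ (ε * r) ^ 2 := by rw [hrhs]; linarith
  calc |Δ| = Real.sqrt (|Δ| ^ 2) := (Real.sqrt_sq (abs_nonneg _)).symm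
    _ ≤ Real.sqrt ((ε * r) ^ 2) := Real.sqrt_le_sqrt key
    _ = ε * r := Real.sqrt_sq (by positivity)
end

section
/- Let r, d, g be integers with g ≤ r ≤ d, t ≥ 0, δE ≥ 0, and real numbers δE_i = E_i - E_0 ≥ 0 for i = 0,...,d-1 such that δE_i = 0 for i < g, 0 < δE_i ≤ δE for g ≤ i < r, and δE_i > δE for r ≤ i < d. Then (∑_{i=r}^{d-1} e^{-2tδE_i}) / (g + ∑_{i=g}^{r-1} e^{-2tδE_i} + ∑_{i=r}^{d-1} e^{-2tδE_i}) ≤ ((d-r) e^{-2tδE}) / (g + (r-g) e^{-2tδE} + (d-r) e^{-2tδE}). -/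
/-!
Bounding every middle term `e^{-2tδE_i}` below by `e^{-2tδE}` and every tail term above by it
enlarges the tail sum and shrinks the rest of the denominator, and `x / (A + x)` increases in `x`
and decreases in `A`.
-/

open Finset

theorem div_add_self_le_div_add_self {α : Type*} [Field α] [LinearOrder α] [IsStrictOrderedRing α]
    {a a' x x' : α} (ha' : 0 ≤ a') (haa' : a' ≤ a) (hx : 0 ≤ x) (hxx' : x ≤ x') :
    x / (a + x) ≤ x' / (a' + x') := by
  rcases hx.eq_or_lt with rfl | hx
  · simpa using div_nonneg (hx.trans hxx') (add_nonneg ha' (hx.trans hxx'))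
  rw [div_le_div_iff₀ (by linarith) (by linarith)]
  nlinarith [mul_le_mul haa' hxx' hx.le (ha'.trans haa')]

theorem antitone_exp_neg_two_mul {t : ℝ} (ht : 0 ≤ t) :
    Antitone fun x : ℝ => Real.exp (-2 * t * x) :=
  fun _ _ hxy => Real.exp_le_exp.mpr (mul_le_mul_of_nonpos_left hxy (by linarith))

theorem ite_bound_key_inequality_general
    (d g r : ℕ) (hgr : g ≤ r) (hrd : r ≤ d)
    (t δE : ℝ) (ht : 0 ≤ t)
    (δ : ℕ → ℝ)
    (hmid : ∀ i, g ≤ i → i < r → 0 < δ i ∧ δ i ≤ δE)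
    (htail : ∀ i, r ≤ i → i < d → δE < δ i) :
    (∑ i ∈ Finset.Ico r d, Real.exp (-2 * t * δ i)) /
        ((g : ℝ) + ∑ i ∈ Finset.Ico g r, Real.exp (-2 * t * δ i)
          + ∑ i ∈ Finset.Ico r d, Real.exp (-2 * t * δ i))
      ≤ ((d : ℝ) - r) * Real.exp (-2 * t * δE) /
        ((g : ℝ) + ((r : ℝ) - g) * Real.exp (-2 * t * δE)
          + ((d : ℝ) - r) * Real.exp (-2 * t * δE)) := by
  set e := Real.exp (-2 * t * δE)
  have htail_le : ∑ i ∈ Ico r d, Real.exp (-2 * t * δ i) ≤ ((d : ℝ) - r) * e := by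
    have := sum_le_card_nsmul (Ico r d) _ e fun i hi ↦
      antitone_exp_neg_two_mul ht (htail i (mem_Ico.1 hi).1 (mem_Ico.1 hi).2).le
    rwa [Nat.card_Ico, nsmul_eq_mul, Nat.cast_sub hrd] at this
  have hmid_ge : ((r : ℝ) - g) * e ≤ ∑ i ∈ Ico g r, Real.exp (-2 * t * δ i) := by
    have := card_nsmul_le_sum (Ico g r) _ e fun i hi ↦
      antitone_exp_neg_two_mul ht (hmid i (mem_Ico.1 hi).1 (mem_Ico.1 hi).2).2
    rwa [Nat.card_Ico, nsmul_eq_mul, Nat.cast_sub hgr] at this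
  have hrg : (0 : ℝ) ≤ r - g := sub_nonneg.2 (by exact_mod_cast hgr)
  refine div_add_self_le_div_add_self (by positivity) (by linarith) ?_ htail_le
  exact sum_nonneg fun i _ ↦ (Real.exp_pos _).le

theorem ite_bound_key_inequality
    (d g r : ℕ) (hgr : g ≤ r) (hrd : r ≤ d)
    (t δE : ℝ) (ht : 0 ≤ t) (hδE : 0 ≤ δE)
    (δ : ℕ → ℝ)
    (hzero : ∀ i, i < g → δ i = 0)
    (hmid : ∀ i, g ≤ i → i < r → 0 < δ i ∧ δ i ≤ δE)
    (htail : ∀ i, r ≤ i → i < d → δE < δ i) :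
    (∑ i ∈ Finset.Ico r d, Real.exp (-2 * t * δ i)) /
        ((g : ℝ) + ∑ i ∈ Finset.Ico g r, Real.exp (-2 * t * δ i)
          + ∑ i ∈ Finset.Ico r d, Real.exp (-2 * t * δ i))
      ≤ ((d : ℝ) - r) * Real.exp (-2 * t * δE) /
        ((g : ℝ) + ((r : ℝ) - g) * Real.exp (-2 * t * δE)
          + ((d : ℝ) - r) * Real.exp (-2 * t * δE)) :=
  ite_bound_key_inequality_general d g r hgr hrd t δE ht δ hmid htail
end

section
/- For a graph G on N vertices and u > 1, if a bitstring s ∈ {0,1}^N does not encode an independent set of G (some edge has both endpoints set to 1), then there exists a bitstring s' encoding an independent set with H(s') < H(s), where H(s) = -∑_i s_i + u ∑_{(i,i')∈E} s_i s_{i'}. -/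
/-- Number of ones in a bitstring. -/
def bitCount {N : ℕ} (s : Fin N → Bool) : ℕ :=
  (Finset.univ.filter fun i => s i = true).card

/-- The edges of `G`, each counted once as an ordered pair with increasing endpoints. -/
def edgePairs {N : ℕ} (G : SimpleGraph (Fin N)) [DecidableRel G.Adj] :
    Finset (Fin N × Fin N) :=
  Finset.univ.filter fun p => p.1 < p.2 ∧ G.Adj p.1 p.2

/-- The classical UD-MIS cost function H(s) = -∑ s_i + u ∑_{(i,i')∈E} s_i s_{i'}. -/
def costH {N : ℕ} (G : SimpleGraph (Fin N)) [DecidableRel G.Adj] (u : ℝ)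
    (s : Fin N → Bool) : ℝ :=
  -(bitCount s : ℝ) +
    u * ∑ p ∈ edgePairs G, (if s p.1 then (1 : ℝ) else 0) * (if s p.2 then (1 : ℝ) else 0)

/-- The bitstring encodes an independent set of `G`. -/
def IsIndepBits {N : ℕ} (G : SimpleGraph (Fin N)) (s : Fin N → Bool) : Prop :=
  ∀ i j, G.Adj i j → ¬(s i = true ∧ s j = true)

lemma flip_step {N : ℕ} (G : SimpleGraph (Fin N)) [DecidableRel G.Adj] (u : ℝ) (hu : 1 < u)
    (s : Fin N → Bool) (hs : ¬ IsIndepBits G s) :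
    ∃ t : Fin N → Bool, bitCount t < bitCount s ∧ costH G u t < costH G u s := by
  simp only [IsIndepBits, not_forall] at hs
  obtain ⟨a, b, hadj, hab⟩ := hs
  rw [not_not] at hab
  obtain ⟨hsa, hsb⟩ := hab
  -- reduce to the case i < j
  suffices H : ∀ i j : Fin N, i < j → G.Adj i j → s i = true → s j = true →
      ∃ t : Fin N → Bool, bitCount t < bitCount s ∧ costH G u t < costH G u s by
    rcases lt_or_gt_of_ne (G.ne_of_adj hadj) with h | h
    · exact H a b h hadj hsa hsb
    · exact H b a h (G.adj_symm hadj) hsb hsa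
  intro i j hij hadj' hsi hsj
  set t : Fin N → Bool := Function.update s i false with ht
  have hti : t i = false := by simp [ht]
  have htk : ∀ k, k ≠ i → t k = s k := fun k hk => Function.update_of_ne hk _ _
  have hfilter : (Finset.univ.filter fun k => t k = true)
      = (Finset.univ.filter fun k => s k = true).erase i := by
    ext k
    by_cases hk : k = i <;> simp [hk, hti, htk, hsi]
  have hmem : i ∈ Finset.univ.filter fun k => s k = true := by simp [hsi]
  have hcard : bitCount t = bitCount s - 1 := by
    rw [bitCount, bitCount, hfilter, Finset.card_erase_of_mem hmem]
  have hpos : 0 < bitCount s := Finset.card_pos.mpr ⟨i, hmem⟩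
  have hcardR : (bitCount t : ℝ) = (bitCount s : ℝ) - 1 := by
    rw [hcard]; push_cast [Nat.cast_sub hpos]; ring
  have hlt : bitCount t < bitCount s := by omega
  refine ⟨t, hlt, ?_⟩
  have hp0 : (i, j) ∈ edgePairs G := by simp [edgePairs, hij, hadj']
  set f : Fin N × Fin N → ℝ := fun p => (if s p.1 then (1:ℝ) else 0) * (if s p.2 then 1 else 0)
  set g : Fin N × Fin N → ℝ := fun p => (if t p.1 then (1:ℝ) else 0) * (if t p.2 then 1 else 0)
  have hsum : (∑ p ∈ edgePairs G, g p) + 1 ≤ ∑ p ∈ edgePairs G, f p := by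
    have : (∑ p ∈ edgePairs G, g p) + 1
        = ∑ p ∈ edgePairs G, (g p + if p = (i, j) then 1 else 0) := by
      rw [Finset.sum_add_distrib, Finset.sum_ite_eq' (edgePairs G) (i, j) (fun _ => (1:ℝ)),
        if_pos hp0]
    rw [this]
    apply Finset.sum_le_sum
    intro p _
    by_cases hp : p = (i, j)
    · subst hp
      simp [f, g, hti, hsi, hsj]
    · rw [if_neg hp, add_zero]
      have hfac : ∀ k, (if t k then (1:ℝ) else 0) ≤ (if s k then 1 else 0) := by
        intro k
        by_cases hk : k = i
        · subst hk; simp [hti, hsi]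
        · rw [htk k hk]
      have h1 := hfac p.1
      have h2 := hfac p.2
      have hg1 : (0:ℝ) ≤ if t p.1 then (1:ℝ) else 0 := by positivity
      have hg2 : (0:ℝ) ≤ if t p.2 then (1:ℝ) else 0 := by positivity
      calc g p ≤ (if s p.1 then (1:ℝ) else 0) * (if t p.2 then 1 else 0) :=
            mul_le_mul_of_nonneg_right h1 hg2
        _ ≤ f p := mul_le_mul_of_nonneg_left h2 (by positivity)
  have hupos : (0:ℝ) < u := lt_trans one_pos hu
  have : costH G u t = -(bitCount s : ℝ) + 1 + u * ∑ p ∈ edgePairs G, g p := by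
    rw [costH, hcardR]; ring
  rw [this, costH]
  have h2 : u * (∑ p ∈ edgePairs G, g p) ≤ u * ((∑ p ∈ edgePairs G, f p) - 1) :=
    mul_le_mul_of_nonneg_left (by linarith) (le_of_lt hupos)
  calc -(bitCount s : ℝ) + 1 + u * ∑ p ∈ edgePairs G, g p
      ≤ -(bitCount s : ℝ) + 1 + u * ((∑ p ∈ edgePairs G, f p) - 1) := by linarith
    _ < -(bitCount s : ℝ) + u * ∑ p ∈ edgePairs G, f p := by ring_nf; nlinarith

theorem exists_independent_with_smaller_cost
    {N : ℕ} (G : SimpleGraph (Fin N)) [DecidableRel G.Adj] (u : ℝ) (hu : 1 < u)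
    (s : Fin N → Bool) (hs : ¬ IsIndepBits G s) :
    ∃ s' : Fin N → Bool, IsIndepBits G s' ∧ costH G u s' < costH G u s := by
  suffices H : ∀ n, ∀ s : Fin N → Bool, bitCount s = n → ¬ IsIndepBits G s →
      ∃ s' : Fin N → Bool, IsIndepBits G s' ∧ costH G u s' < costH G u s from
    H (bitCount s) s rfl hs
  intro n
  induction n using Nat.strong_induction_on with
  | _ n ih =>
    intro s hn hns
    obtain ⟨t, hlt, hcost⟩ := flip_step G u hu s hns
    by_cases hti : IsIndepBits G t
    · exact ⟨t, hti, hcost⟩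
    · obtain ⟨s', h1, h2⟩ := ih (bitCount t) (hn ▸ hlt) t rfl hti
      exact ⟨s', h1, lt_trans h2 hcost⟩
end

section
/- Let α, β ∈ [0, π/2] and ε ∈ [0, √2] with cos|α - β| ≥ 1 - ε²/2. Then |sin²α - sin²β| ≤ ε √(1 - ε²/4). -/
/-!
Write `|sin²α - sin²β| = |sin (α + β)| |sin (α - β)| ≤ |sin (α - β)|`. Since
`0 ≤ 1 - ε²/2 ≤ cos (α - β)`, squaring gives
`sin² (α - β) = 1 - cos² (α - β) ≤ 1 - (1 - ε²/2)² = ε² (1 - ε²/4)`.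
-/

open Real

lemma Real.sin_sq_sub_sin_sq (x y : ℝ) :
    sin x ^ 2 - sin y ^ 2 = sin (x + y) * sin (x - y) := by
  rw [sin_add, sin_sub]
  linear_combination sin y ^ 2 * sin_sq_add_cos_sq x - sin x ^ 2 * sin_sq_add_cos_sq y

lemma Real.abs_sin_sq_sub_sin_sq_le (x y : ℝ) :
    |sin x ^ 2 - sin y ^ 2| ≤ |sin (x - y)| := by
  rw [sin_sq_sub_sin_sq, abs_mul]
  exact mul_le_of_le_one_left (abs_nonneg _) (abs_sin_le_one _)

lemma Real.abs_sin_le_sqrt_one_sub_sq_of_le_cos {x c : ℝ} (hc : 0 ≤ c) (h : c ≤ cos x) :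
    |sin x| ≤ √(1 - c ^ 2) := by
  rw [abs_sin_eq_sqrt_one_sub_cos_sq]
  gcongr

theorem abs_sin_sq_sub_le_of_cos_ge_general (α β ε : ℝ)
    (hε0 : 0 ≤ ε) (hε2 : ε ≤ Real.sqrt 2)
    (hcos : 1 - ε ^ 2 / 2 ≤ Real.cos |α - β|) :
    |Real.sin α ^ 2 - Real.sin β ^ 2| ≤ ε * Real.sqrt (1 - ε ^ 2 / 4) := by
  have hε_sq : ε ^ 2 ≤ 2 := by
    simpa using pow_le_pow_left₀ hε0 hε2 2
  calc |sin α ^ 2 - sin β ^ 2| ≤ |sin (α - β)| := abs_sin_sq_sub_sin_sq_le α β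
    _ ≤ √(1 - (1 - ε ^ 2 / 2) ^ 2) :=
      abs_sin_le_sqrt_one_sub_sq_of_le_cos (by linarith) (by rwa [← cos_abs])
    _ = ε * √(1 - ε ^ 2 / 4) := by
      rw [show 1 - (1 - ε ^ 2 / 2) ^ 2 = ε ^ 2 * (1 - ε ^ 2 / 4) by ring,
        sqrt_mul (sq_nonneg ε), sqrt_sq hε0]

theorem abs_sin_sq_sub_le_of_cos_ge (α β ε : ℝ)
    (hα : α ∈ Set.Icc 0 (Real.pi / 2)) (hβ : β ∈ Set.Icc 0 (Real.pi / 2))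
    (hε0 : 0 ≤ ε) (hε2 : ε ≤ Real.sqrt 2)
    (hcos : 1 - ε ^ 2 / 2 ≤ Real.cos |α - β|) :
    |Real.sin α ^ 2 - Real.sin β ^ 2| ≤ ε * Real.sqrt (1 - ε ^ 2 / 4) :=
  abs_sin_sq_sub_le_of_cos_ge_general α β ε hε0 hε2 hcos
end

section
/- Let τ > 0 and let h be a Hermitian operator on a finite-dimensional Hilbert space, and ψ a unit vector with e^{-τ h}ψ ≠ 0. Define ψ' = e^{-τ h}ψ / ‖e^{-τ h}ψ‖. Then ⟨ψ', h ψ'⟩ ≤ ⟨ψ, h ψ⟩, with equality if and only if ψ is an eigenvector of h. -/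
lemma cheb {n : ℕ} (w μ g : Fin n → ℝ) (hw : ∀ i, 0 ≤ w i) (hw1 : ∑ i, w i = 1)
    (hmono : ∀ i j, μ i ≤ μ j → g j ≤ g i) (hinj : ∀ i j, g i = g j → μ i = μ j) :
    (∑ i, w i * g i * μ i) ≤ (∑ i, w i * g i) * (∑ i, w i * μ i) ∧
    ((∑ i, w i * g i * μ i) = (∑ i, w i * g i) * (∑ i, w i * μ i) ↔
      ∀ i j, w i ≠ 0 → w j ≠ 0 → μ i = μ j) := by
  set F : Fin n → Fin n → ℝ := fun i j => w i * w j * ((g i - g j) * (μ j - μ i)) with hF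
  have hFnn : ∀ i j, 0 ≤ F i j := by
    intro i j
    apply mul_nonneg (mul_nonneg (hw i) (hw j))
    rcases le_total (μ i) (μ j) with hle | hle
    · exact mul_nonneg (sub_nonneg.2 (hmono i j hle)) (sub_nonneg.2 hle)
    · nlinarith [sub_nonpos.2 (hmono j i hle), sub_nonpos.2 hle]
  have key : ∑ i, ∑ j, F i j =
      2 * ((∑ i, w i * g i) * (∑ i, w i * μ i) - (∑ i, w i * g i * μ i)) := by
    have expand : ∀ i j : Fin n, F i j =
        (w i * g i) * (w j * μ j) - (w i * g i * μ i) * w j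
          + (w i * μ i) * (w j * g j) - w i * (w j * g j * μ j) := by
      intro i j; simp only [hF]; ring
    simp only [expand, Finset.sum_sub_distrib, Finset.sum_add_distrib, ← Finset.mul_sum,
      ← Finset.sum_mul]
    rw [hw1]
    ring
  have hnn : 0 ≤ ∑ i, ∑ j, F i j :=
    Finset.sum_nonneg fun i _ => Finset.sum_nonneg fun j _ => hFnn i j
  constructor
  · nlinarith [hnn, key]
  · constructor
    · intro heq
      have hzero : ∑ i, ∑ j, F i j = 0 := by rw [key, heq]; ring
      have hall : ∀ i ∈ Finset.univ, ∀ j ∈ Finset.univ, F i j = 0 := by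
        intro i _
        have := (Finset.sum_eq_zero_iff_of_nonneg
          (fun i _ => Finset.sum_nonneg fun j _ => hFnn i j)).1 hzero i (Finset.mem_univ i)
        exact fun j _ => (Finset.sum_eq_zero_iff_of_nonneg (fun j _ => hFnn i j)).1 this j
          (Finset.mem_univ j)
      intro i j hwi hwj
      have h0 : (g i - g j) * (μ j - μ i) = 0 := by
        have := hall i (Finset.mem_univ i) j (Finset.mem_univ j)
        simp only [hF] at this
        rcases mul_eq_zero.1 this with h | h
        · exact absurd (mul_eq_zero.1 h) (by tauto)
        · exact h
      rcases mul_eq_zero.1 h0 with h | h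
      · exact hinj i j (by linarith)
      · linarith
    · intro hcond
      have hzero : ∀ i j, F i j = 0 := by
        intro i j
        by_cases hwi : w i = 0
        · simp [hF, hwi]
        by_cases hwj : w j = 0
        · simp [hF, hwj]
        · have := hcond i j hwi hwj
          simp [hF, this]
      have : ∑ i, ∑ j, F i j = 0 := by simp [hzero]
      rw [this] at key
      linarith

open NormedSpace in
lemma exp_apply_eigenvector {H : Type*} [NormedAddCommGroup H] [InnerProductSpace ℂ H]
    [CompleteSpace H] (A : H →L[ℂ] H) (v : H) (c : ℂ) (hv : A v = c • v) :
    NormedSpace.exp A v = Complex.exp c • v := by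
  have hAn : ∀ n : ℕ, (A ^ n) v = c ^ n • v := by
    intro n
    induction n with
    | zero => simp
    | succ n ih => rw [pow_succ, pow_succ, ContinuousLinearMap.mul_apply, hv, map_smul, ih,
        smul_smul, mul_comm]
  have hs : Summable fun n : ℕ => ((Nat.factorial n : ℂ))⁻¹ • A ^ n := expSeries_summable' A
  have hs2 : Summable fun n : ℕ => ((Nat.factorial n : ℂ))⁻¹ • c ^ n := expSeries_summable' c
  rw [exp_eq_tsum (𝕂 := ℂ)]
  have := (ContinuousLinearMap.apply ℂ H v).map_tsum hs
  simp only [ContinuousLinearMap.apply_apply] at this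
  rw [this]
  simp only [ContinuousLinearMap.smul_apply, hAn, smul_smul]
  rw [Summable.tsum_smul_const (hs2.congr (by intro n; simp [smul_eq_mul]))]
  congr 1
  rw [Complex.exp_eq_exp_ℂ, exp_eq_tsum (𝕂 := ℂ)]
  simp [smul_eq_mul]

theorem imaginary_time_step_decreases_energy
    {H : Type*} [NormedAddCommGroup H] [InnerProductSpace ℂ H] [FiniteDimensional ℂ H]
    (h : H →L[ℂ] H) (hsa : IsSelfAdjoint h) (τ : ℝ) (hτ : 0 < τ)
    (ψ : H) (hψ : ‖ψ‖ = 1) (hne : NormedSpace.exp (-(τ : ℂ) • h) ψ ≠ 0) :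
    (inner ℂ ((‖NormedSpace.exp (-(τ : ℂ) • h) ψ‖ : ℂ)⁻¹ • NormedSpace.exp (-(τ : ℂ) • h) ψ)
        (h ((‖NormedSpace.exp (-(τ : ℂ) • h) ψ‖ : ℂ)⁻¹ •
          NormedSpace.exp (-(τ : ℂ) • h) ψ)) : ℂ).re
      ≤ (inner ℂ ψ (h ψ) : ℂ).re ∧
    ((inner ℂ ((‖NormedSpace.exp (-(τ : ℂ) • h) ψ‖ : ℂ)⁻¹ • NormedSpace.exp (-(τ : ℂ) • h) ψ)
        (h ((‖NormedSpace.exp (-(τ : ℂ) • h) ψ‖ : ℂ)⁻¹ •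
          NormedSpace.exp (-(τ : ℂ) • h) ψ)) : ℂ).re
      = (inner ℂ ψ (h ψ) : ℂ).re ↔ ∃ c : ℂ, h ψ = c • ψ) := by
  have hsym : (h : H →ₗ[ℂ] H).IsSymmetric := hsa.isSymmetric
  set n := Module.finrank ℂ H with hn
  set b : OrthonormalBasis (Fin n) ℂ H := hsym.eigenvectorBasis rfl with hb
  set μ : Fin n → ℝ := hsym.eigenvalues rfl with hμ
  set A : H →L[ℂ] H := -(τ : ℂ) • h with hA
  set φ : H := NormedSpace.exp A ψ with hφ
  -- exp is self-adjoint (A is self-adjoint)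
  have hAsa : IsSelfAdjoint A := by
    simp only [hA, IsSelfAdjoint, star_smul, hsa.star_eq, star_neg, Complex.star_def,
      Complex.conj_ofReal]
  have hexpsa : IsSelfAdjoint (NormedSpace.exp A) := hAsa.exp
  set a : EuclideanSpace ℂ (Fin n) := b.repr ψ with ha
  set e : Fin n → ℝ := fun i => Real.exp (-(τ * μ i)) with he
  set w : Fin n → ℝ := fun i => Complex.normSq (a i) with hw
  set g : Fin n → ℝ := fun i => Real.exp (-(2 * τ * μ i)) with hg
  have heg : ∀ i, e i * e i = g i := by
    intro i; rw [he, hg, ← Real.exp_add]; ring_nf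
  -- h in coordinates
  have hhr : ∀ (x : H) (i : Fin n), b.repr (h x) i = (μ i : ℂ) * b.repr x i := fun x i =>
    hsym.eigenvectorBasis_apply_self_apply rfl x i
  -- exp action on basis vectors
  have hexpb : ∀ i, NormedSpace.exp A (b i) = ((e i : ℝ) : ℂ) • b i := by
    intro i
    have h1 : A (b i) = ((-(τ * μ i) : ℝ) : ℂ) • b i := by
      have h2 := hsym.apply_eigenvectorBasis rfl i
      simp only [ContinuousLinearMap.coe_coe] at h2
      rw [hA, ContinuousLinearMap.smul_apply, h2, smul_smul]
      rw [← hμ, ← hb]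
      congr 1
      push_cast
      try ring
      try rfl
      try simp [RCLike.ofReal_alg]
    rw [exp_apply_eigenvector A (b i) _ h1, ← Complex.ofReal_exp]
  -- coordinates of φ
  have hφr : ∀ i, b.repr φ i = (e i : ℂ) * a i := by
    intro i
    rw [hφ, b.repr_apply_apply]
    have := hexpsa.isSymmetric (b i) ψ
    simp only [ContinuousLinearMap.coe_coe] at this
    rw [← this, hexpb i, inner_smul_left, Complex.conj_ofReal, ← b.repr_apply_apply]
  -- inner products in coordinates
  have hinner : ∀ x y : H, (inner ℂ x y : ℂ) = ∑ i, (starRingEnd ℂ) (b.repr x i) * b.repr y i := by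
    intro x y
    rw [← b.repr.inner_map_map x y]
    simp only [PiLp.inner_apply, RCLike.inner_apply]
    exact Finset.sum_congr rfl fun _ _ => mul_comm _ _
  have hconj : ∀ z : ℂ, (starRingEnd ℂ) z * z = (Complex.normSq z : ℂ) := by
    intro z; rw [mul_comm, Complex.mul_conj]
  have hwnn : ∀ i, 0 ≤ w i := fun i => Complex.normSq_nonneg _
  have hsum1 : ∑ i, w i = 1 := by
    have h1 := hinner ψ ψ
    simp only [hconj] at h1
    have h2 : (inner ℂ ψ ψ : ℂ) = 1 := by
      rw [inner_self_eq_norm_sq_to_K (𝕜 := ℂ) ψ, hψ]; norm_num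
    rw [h2, ← Complex.ofReal_sum] at h1
    exact_mod_cast h1.symm
  have hE0 : (inner ℂ ψ (h ψ) : ℂ) = ((∑ i, w i * μ i : ℝ) : ℂ) := by
    rw [hinner ψ (h ψ), Complex.ofReal_sum]
    refine Finset.sum_congr rfl fun i _ => ?_
    rw [hhr ψ i]
    calc (starRingEnd ℂ) (a i) * ((μ i : ℂ) * b.repr ψ i)
        = (μ i : ℂ) * ((starRingEnd ℂ) (a i) * a i) := by rw [← ha]; ring
      _ = ((w i * μ i : ℝ) : ℂ) := by rw [hconj, hw]; push_cast; ring
  have hS : (inner ℂ φ (h φ) : ℂ) = ((∑ i, w i * g i * μ i : ℝ) : ℂ) := by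
    rw [hinner φ (h φ), Complex.ofReal_sum]
    refine Finset.sum_congr rfl fun i _ => ?_
    rw [hhr φ i, hφr i]
    calc (starRingEnd ℂ) ((e i : ℂ) * a i) * ((μ i : ℂ) * ((e i : ℂ) * a i))
        = (μ i : ℂ) * ((e i : ℂ) * (starRingEnd ℂ) (e i : ℂ)) *
            ((starRingEnd ℂ) (a i) * a i) := by simp only [map_mul]; ring
      _ = ((w i * g i * μ i : ℝ) : ℂ) := by
          rw [hconj, Complex.conj_ofReal, ← Complex.ofReal_mul, heg i, hw]
          push_cast; ring
  have hWnorm : ‖φ‖ ^ 2 = ∑ i, w i * g i := by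
    have h1 := hinner φ φ
    have h3 : ∀ i, (starRingEnd ℂ) (b.repr φ i) * b.repr φ i = ((w i * g i : ℝ) : ℂ) := by
      intro i
      rw [hφr i, hconj]
      rw [show Complex.normSq ((e i : ℂ) * a i) = w i * g i by
        rw [Complex.normSq_mul, Complex.normSq_ofReal, hw, ← heg i]; ring]
    simp only [h3] at h1
    rw [← Complex.ofReal_sum, inner_self_eq_norm_sq_to_K (𝕜 := ℂ) φ] at h1
    simp only [Complex.coe_algebraMap] at h1
    exact_mod_cast h1
  have hφne : ‖φ‖ ≠ 0 := norm_ne_zero_iff.2 hne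
  have hWpos : 0 < ∑ i, w i * g i := by
    rw [← hWnorm]; positivity
  have hL : (inner ℂ (((‖φ‖ : ℂ))⁻¹ • φ) (h (((‖φ‖ : ℂ))⁻¹ • φ)) : ℂ).re =
      (∑ i, w i * g i)⁻¹ * (∑ i, w i * g i * μ i) := by
    rw [map_smul, inner_smul_left, inner_smul_right, hS]
    rw [show ((‖φ‖ : ℂ))⁻¹ = ((‖φ‖⁻¹ : ℝ) : ℂ) from (Complex.ofReal_inv _).symm,
      Complex.conj_ofReal, ← Complex.ofReal_mul, ← Complex.ofReal_mul, Complex.ofReal_re]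
    rw [show (∑ i, w i * g i)⁻¹ = ‖φ‖⁻¹ * ‖φ‖⁻¹ by
      rw [← hWnorm]; rw [pow_two, mul_inv]]
    ring
  have hmono : ∀ i j, μ i ≤ μ j → g j ≤ g i := by
    intro i j hij
    simp only [hg]
    exact Real.exp_le_exp.2 (by nlinarith)
  have hinj2 : ∀ i j, g i = g j → μ i = μ j := by
    intro i j hij
    simp only [hg] at hij
    have h2 := Real.exp_injective hij
    have h3 : 2 * τ * μ i = 2 * τ * μ j := by linarith [neg_injective h2]
    exact mul_left_cancel₀ (by positivity) h3
  obtain ⟨hle, hiff⟩ := cheb w μ g hwnn hsum1 hmono hinj2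
  have hsupp : (∀ i j, w i ≠ 0 → w j ≠ 0 → μ i = μ j) ↔ ∃ c : ℂ, h ψ = c • ψ := by
    constructor
    · intro hc
      obtain ⟨i0, hi0⟩ : ∃ i, w i ≠ 0 := by
        by_contra hall; push_neg at hall
        rw [Finset.sum_eq_zero (fun i _ => hall i)] at hsum1; norm_num at hsum1
      refine ⟨(μ i0 : ℂ), b.repr.injective ?_⟩
      refine PiLp.ext fun i => ?_
      rw [map_smul]
      show b.repr (h ψ) i = ((μ i0 : ℂ) • b.repr ψ) i
      rw [hhr ψ i, PiLp.smul_apply, smul_eq_mul]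
      by_cases hai : b.repr ψ i = 0
      · rw [hai]; ring
      · have hwi : w i ≠ 0 := by
          simp only [hw]
          exact fun hz => hai (Complex.normSq_eq_zero.1 hz)
        rw [hc i i0 hwi hi0]
    · rintro ⟨c, hc⟩ i j hwi hwj
      have key : ∀ k, (μ k : ℂ) * a k = c * a k := by
        intro k
        have h1 := congrArg (fun x => b.repr x k) hc
        simpa only [hhr ψ k, map_smul, PiLp.smul_apply, smul_eq_mul, ← ha] using h1
      have hai : a i ≠ 0 := fun hz => hwi (by simp [hw, hz])
      have haj : a j ≠ 0 := fun hz => hwj (by simp [hw, hz])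
      have h1 : (μ i : ℂ) = c := mul_right_cancel₀ hai (key i)
      have h2 : (μ j : ℂ) = c := mul_right_cancel₀ haj (key j)
      exact_mod_cast h1.trans h2.symm
  constructor
  · rw [hL, hE0, Complex.ofReal_re]
    exact (inv_mul_le_iff₀ hWpos).2 hle
  · rw [hL, hE0, Complex.ofReal_re]
    constructor
    · intro heq
      refine hsupp.1 (hiff.1 ?_)
      have := (inv_mul_eq_iff_eq_mul₀ (ne_of_gt hWpos)).1 heq
      linarith [this]
    · intro hex
      rw [hiff.2 (hsupp.2 hex)]
      rw [inv_mul_cancel_left₀ (ne_of_gt hWpos)]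
end
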